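/- For every finite alphabet A with |A| = n ≥ 2 and every function f : A × A → A, the map Θ : A⁴ → A⁴ defined by Θ(x,y,z,w) = (f(x,y), f(x,z), f(y,w), f(z,w)) is not injective. -/
import Mathlib


/-- The single-function diamond map on A⁴ is never injective when |A| ≥ 2. -/
theorem diamond_not_injective {A : Type*} [Fintype A] (n : ℕ)
    (hA : Fintype.card A = n) (hn : 2 ≤ n) (f : A × A → A) :
    ¬ Function.Injective
      (fun p : A × A × A × A =>
        (f (p.1, p.2.1), f (p.1, p.2.2.1), f (p.2.1, p.2.2.2), f (p.2.2.1, p.2.2.2))) := by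
  intro hinj
  obtain ⟨c, d, hcd⟩ : ∃ c d : A, c ≠ d :=
    Fintype.exists_pair_of_one_lt_card (by omega)
  -- each row map w ↦ f (x, w) is injective
  have hrow : ∀ x : A, Function.Injective (fun w => f (x, w)) := by
    intro x v v' h
    have := hinj (a₁ := (x, x, x, v)) (a₂ := (x, x, x, v')) (by simp_all)
    simpa using this
  -- Θ is surjective since injective on a finite type
  have hsurj : Function.Surjective
      (fun p : A × A × A × A =>
        (f (p.1, p.2.1), f (p.1, p.2.2.1), f (p.2.1, p.2.2.2), f (p.2.2.1, p.2.2.2))) :=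
    (Finite.injective_iff_surjective.mp hinj)
  obtain ⟨⟨x, y, z, w⟩, hq⟩ := hsurj (c, c, c, d)
  simp only [Prod.mk.injEq] at hq
  obtain ⟨h1, h2, h3, h4⟩ := hq
  have hyz : y = z := hrow x (h1.trans h2.symm)
  exact hcd (h3.symm.trans (by rw [hyz, h4]))
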